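/- Let h be the function on (0,π)² given by the series h(x,y) = (4/π)·Σ_{k=0}^∞ (sin((2k+1)x)/(2k+1))·(F_{2k+1}(y) − coth((2k+1)π)·G_{2k+1}(y)). Then for every (x,y) ∈ (0,π)², h is differentiable in its first variable and h_x(x,y) = (4/π)·Σ_{k=0}^∞ cos((2k+1)x)·(F_{2k+1}(y) − coth((2k+1)π)·G_{2k+1}(y)), where this last series converges. -/

import Mathlib

open Real Filter Set Topology

/-- Hyperbolic cotangent. -/
noncomputable def coth (t : ℝ) : ℝ := Real.cosh t / Real.sinh t

/-- `F n y = cosh (n y) + cosh (n (π − y))`. -/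
noncomputable def F (n y : ℝ) : ℝ := Real.cosh (n * y) + Real.cosh (n * (π - y))

/-- `G n y = sinh (n y) + sinh (n (π − y))`. -/
noncomputable def G (n y : ℝ) : ℝ := Real.sinh (n * y) + Real.sinh (n * (π - y))

/-- The harmonic function `h` on `(0,π)²` given by its Fourier series. -/
noncomputable def h (x y : ℝ) : ℝ :=
  (4 / π) * ∑' k : ℕ, (Real.sin ((2 * k + 1) * x) / (2 * k + 1)) *
    (F (2 * k + 1) y - coth ((2 * k + 1) * π) * G (2 * k + 1) y)

/-- Partial derivative of `h` in its first variable. -/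
noncomputable def hx (x y : ℝ) : ℝ := deriv (fun x' => h x' y) x

/-!
Since `n y + n (π - y) = n π`, the addition formulas collapse the coefficient
`F n y - coth (n π) G n y` to `G n y / sinh (n π) ≤ 2 (e^{-n y} + e^{-n (π - y)})`.
For `0 < y < π` the coefficients are therefore absolutely summable, so the termwise derivatives
`cos ((2k+1) x)` times the coefficients are uniformly dominated by a summable sequence and the
series may be differentiated term by term.
-/

noncomputable def hCoeff (n y : ℝ) : ℝ := F n y - coth (n * π) * G n y

theorem cosh_add_cosh_sub_coth_mul (a b : ℝ) (hs : sinh (a + b) ≠ 0) :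
    cosh a + cosh b - coth (a + b) * (sinh a + sinh b) = (sinh a + sinh b) / sinh (a + b) := by
  unfold coth
  field_simp
  rw [sinh_add, cosh_add]
  linear_combination sinh b * cosh_sq_sub_sinh_sq a + sinh a * cosh_sq_sub_sinh_sq b

theorem hCoeff_eq {n : ℝ} (hn : n ≠ 0) (y : ℝ) : hCoeff n y = G n y / sinh (n * π) := by
  have hsum : n * y + n * (π - y) = n * π := by ring
  have := cosh_add_cosh_sub_coth_mul (n * y) (n * (π - y))
    (by rw [hsum]; exact sinh_ne_zero.2 (mul_ne_zero hn pi_ne_zero))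
  rwa [hsum] at this

theorem sinh_le_exp_div_two (t : ℝ) : sinh t ≤ exp t / 2 := by
  rw [sinh_eq]
  linarith [exp_pos (-t)]

theorem exp_div_four_le_sinh {t : ℝ} (ht : 1 ≤ t) : exp t / 4 ≤ sinh t := by
  have h2 : 2 ≤ exp t := by linarith [add_one_le_exp t]
  have h1 : exp (-t) ≤ 1 := exp_le_one_iff.2 (by linarith)
  rw [sinh_eq]
  linarith

theorem sinh_add_sinh_div_sinh_add_le {a b : ℝ} (h : 1 ≤ a + b) :
    (sinh a + sinh b) / sinh (a + b) ≤ 2 * (exp (-a) + exp (-b)) :=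
  calc (sinh a + sinh b) / sinh (a + b)
      ≤ (exp a / 2 + exp b / 2) / (exp (a + b) / 4) :=
        div_le_div₀ (by positivity) (add_le_add (sinh_le_exp_div_two a) (sinh_le_exp_div_two b))
          (by positivity) (exp_div_four_le_sinh h)
    _ = 2 * (exp (-a) + exp (-b)) := by
        rw [exp_add, exp_neg, exp_neg]
        field_simp
        ring

theorem abs_hCoeff_le {n y : ℝ} (hn : 1 ≤ n) (hy : y ∈ Icc 0 π) :
    |hCoeff n y| ≤ 2 * (exp (-(n * y)) + exp (-(n * (π - y)))) := by
  have hn0 : 0 < n := by linarith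
  have hy' : 0 ≤ π - y := by linarith [hy.2]
  have hG : 0 ≤ G n y := add_nonneg (sinh_nonneg_iff.2 (mul_nonneg hn0.le hy.1))
    (sinh_nonneg_iff.2 (mul_nonneg hn0.le hy'))
  have hnπ : 1 ≤ n * y + n * (π - y) := by nlinarith [pi_gt_three]
  rw [hCoeff_eq hn0.ne', abs_of_nonneg (div_nonneg hG (sinh_nonneg_iff.2 (by positivity)))]
  have := sinh_add_sinh_div_sinh_add_le hnπ
  rwa [show n * y + n * (π - y) = n * π by ring] at this

theorem summable_abs_hCoeff {y : ℝ} (hy : y ∈ Ioo 0 π) :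
    Summable fun k : ℕ => |hCoeff (2 * k + 1) y| := by
  have hy' : 0 < π - y := by linarith [hy.2]
  have hgeom : Summable fun k : ℕ => 2 * (exp (k * -y) + exp (k * -(π - y))) :=
    ((summable_exp_nat_mul_iff.2 (neg_neg_of_pos hy.1)).add
      (summable_exp_nat_mul_iff.2 (neg_neg_of_pos hy'))).mul_left 2
  refine hgeom.of_nonneg_of_le (fun _ => abs_nonneg _) fun k => ?_
  have hk : (0 : ℝ) ≤ k := k.cast_nonneg
  refine (abs_hCoeff_le (by linarith) (Ioo_subset_Icc_self hy)).trans ?_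
  gcongr <;> nlinarith [hy.1]

section FrequencySeries

variable {ω c : ℕ → ℝ}

theorem hasDerivAt_sin_mul_div {n : ℝ} (hn : n ≠ 0) (x : ℝ) :
    HasDerivAt (fun x => sin (n * x) / n) (cos (n * x)) x := by
  refine ((((hasDerivAt_id x).const_mul n).sin).div_const n).congr_deriv ?_
  rw [mul_one, mul_div_cancel_right₀ _ hn, id]

theorem summable_cos_mul (hc : Summable fun k => ‖c k‖) (x : ℝ) :
    Summable fun k => cos (ω k * x) * c k :=
  hc.of_norm_bounded fun k => by
    rw [norm_mul]
    exact mul_le_of_le_one_left (norm_nonneg _) (abs_cos_le_one _)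

theorem hasDerivAt_tsum_sin_div_mul (hω : ∀ k, 1 ≤ |ω k|) (hc : Summable fun k => ‖c k‖)
    (x : ℝ) :
    HasDerivAt (fun x => ∑' k, sin (ω k * x) / ω k * c k) (∑' k, cos (ω k * x) * c k) x := by
  have hω0 : ∀ k, ω k ≠ 0 := fun k => abs_pos.1 (zero_lt_one.trans_le (hω k))
  refine hasDerivAt_tsum (y₀ := x) hc
    (fun k x => (hasDerivAt_sin_mul_div (hω0 k) x).mul_const (c k)) (fun k x => ?_) ?_ x
  · rw [norm_mul]
    exact mul_le_of_le_one_left (norm_nonneg _) (abs_cos_le_one _)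
  · refine hc.of_norm_bounded fun k => ?_
    rw [norm_mul, norm_div]
    exact mul_le_of_le_one_left (norm_nonneg _)
      (div_le_one_of_le₀ ((abs_sin_le_one _).trans (hω k)) (norm_nonneg _))

end FrequencySeries

theorem stmt10 :
    ∀ x ∈ Set.Ioo (0:ℝ) π, ∀ y ∈ Set.Ioo (0:ℝ) π,
      Summable (fun k : ℕ =>
        Real.cos ((2 * k + 1) * x) * (F (2 * k + 1) y - coth ((2 * k + 1) * π) * G (2 * k + 1) y)) ∧
      HasDerivAt (fun x' => h x' y)
        ((4 / π) * ∑' k : ℕ,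
          Real.cos ((2 * k + 1) * x) * (F (2 * k + 1) y - coth ((2 * k + 1) * π) * G (2 * k + 1) y)) x := by
  intro x _ y hy
  have hc : Summable fun k : ℕ => ‖hCoeff (2 * k + 1) y‖ := summable_abs_hCoeff hy
  have hω : ∀ k : ℕ, 1 ≤ |(2 * k + 1 : ℝ)| := fun k => by
    rw [abs_of_pos (by positivity)]
    linarith [k.cast_nonneg (α := ℝ)]
  exact ⟨summable_cos_mul hc x, (hasDerivAt_tsum_sin_div_mul hω hc x).const_mul (4 / π)⟩
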